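/- arXiv:math/0308036 — 8 statements merged into one kernel-verified Lean document; each statement's English description precedes it below -/
import Mathlib

section
/- Let R be a commutative noetherian ring and M a finitely generated R-module. Consider the covariant functor F from the category of commutative R-algebras to sets defined by F(T) = M ⊗_R T, where an R-algebra homomorphism T → T' is sent to the induced map M ⊗_R T → M ⊗_R T'. Then F is corepresentable (i.e., there exists a commutative R-algebra A together with a natural isomorphism Hom_{R-alg}(A, −) ≅ F) if and only if M is a projective R-module. -/
open TensorProduct

universe uA uT

/-- A commutative `R`-algebra `A` corepresenting the functor `T ↦ M ⊗[R] T`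
on commutative `R`-algebras: for every commutative `R`-algebra `T` there is a
bijection `Hom_{R-alg}(A, T) ≃ M ⊗[R] T`, natural in `T` (where an `R`-algebra
homomorphism `f : T → T'` induces the map `id_M ⊗ f : M ⊗[R] T → M ⊗[R] T'`). -/
structure TensorCorepresentation (R : Type*) [CommRing R]
    (M : Type*) [AddCommGroup M] [Module R M] : Type _ where
  A : Type uA
  [commRingA : CommRing A]
  [algebraA : Algebra R A]
  equiv : ∀ (T : Type uT) [CommRing T] [Algebra R T], (A →ₐ[R] T) ≃ M ⊗[R] T
  naturality : ∀ (T : Type uT) [CommRing T] [Algebra R T]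
      (T' : Type uT) [CommRing T'] [Algebra R T'] (f : T →ₐ[R] T') (φ : A →ₐ[R] T),
      equiv T' (f.comp φ) = LinearMap.lTensor M f.toLinearMap (equiv T φ)

section Aux
variable {R : Type} [CommRing R] {M : Type} [AddCommGroup M] [Module R M]
variable {n : ℕ} (r : (Fin n → R) →ₗ[R] M) (s : M →ₗ[R] (Fin n → R))
variable (T : Type) [CommRing T] [Algebra R T]

noncomputable def betaL : (Fin n → T) →ₗ[R] M ⊗[R] T :=
  ∑ i : Fin n, (TensorProduct.mk R M T (r (Pi.single i 1))).comp (LinearMap.proj i)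

noncomputable def gammaL : M ⊗[R] T →ₗ[R] (Fin n → T) :=
  LinearMap.pi fun i =>
    TensorProduct.lift ((LinearMap.lsmul R T).comp ((LinearMap.proj i).comp s))

lemma betaL_apply (t : Fin n → T) :
    betaL r T t = ∑ i : Fin n, r (Pi.single i 1) ⊗ₜ[R] t i := by
  simp [betaL]

lemma gammaL_tmul (m : M) (t : T) (i : Fin n) :
    gammaL s T (m ⊗ₜ[R] t) i = s m i • t := rfl

lemma single_sum (v : Fin n → R) :
    ∑ i : Fin n, v i • (Pi.single i 1 : Fin n → R) = v := by
  funext k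
  simp [Finset.sum_apply, Pi.single_apply]

lemma beta_gamma (hrs : r.comp s = LinearMap.id) (x : M ⊗[R] T) :
    betaL r T (gammaL s T x) = x := by
  induction x using TensorProduct.induction_on with
  | zero => simp
  | tmul m t =>
      rw [betaL_apply]
      calc ∑ i : Fin n, r (Pi.single i 1) ⊗ₜ[R] gammaL s T (m ⊗ₜ[R] t) i
          = ∑ i : Fin n, (s m i • r (Pi.single i 1)) ⊗ₜ[R] t := by
            simp_rw [gammaL_tmul, ← TensorProduct.smul_tmul]
        _ = (∑ i : Fin n, s m i • r (Pi.single i 1)) ⊗ₜ[R] t := by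
            rw [TensorProduct.sum_tmul]
        _ = m ⊗ₜ[R] t := by
            simp_rw [← map_smul]
            rw [← map_sum, single_sum]
            have := LinearMap.congr_fun hrs m
            simp only [LinearMap.comp_apply, LinearMap.id_apply] at this
            rw [this]
  | add x y hx hy => rw [map_add, map_add, hx, hy]

lemma gamma_beta (t : Fin n → T) (i : Fin n) :
    gammaL s T (betaL r T t) i = ∑ j : Fin n, s (r (Pi.single j 1)) i • t j := by
  rw [betaL_apply, map_sum]
  simp [gammaL_tmul]

noncomputable def relPoly (i : Fin n) : MvPolynomial (Fin n) R :=
  (∑ j : Fin n, MvPolynomial.C (s (r (Pi.single j 1)) i) * MvPolynomial.X j)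
    - MvPolynomial.X i

lemma aeval_relPoly (g : Fin n → T) (i : Fin n) :
    MvPolynomial.aeval g (relPoly r s i) = gammaL s T (betaL r T g) i - g i := by
  rw [gamma_beta]
  simp [relPoly, Algebra.smul_def]

variable {T} in
lemma liftable (hrs : r.comp s = LinearMap.id) (x : M ⊗[R] T) :
    ∀ a ∈ Ideal.span (Set.range (relPoly r s)),
      MvPolynomial.aeval (fun i => gammaL s T x i) a = 0 := by
  have hsub : Ideal.span (Set.range (relPoly r s)) ≤
      RingHom.ker (MvPolynomial.aeval (R := R) (fun i => gammaL s T x i)).toRingHom := by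
    rw [Ideal.span_le]
    rintro _ ⟨i, rfl⟩
    simp only [SetLike.mem_coe, RingHom.mem_ker, AlgHom.toRingHom_eq_coe, RingHom.coe_coe]
    rw [aeval_relPoly r s T, beta_gamma r s T hrs, sub_self]
  intro a ha
  have := hsub ha
  rw [RingHom.mem_ker] at this
  exact this

/-- The corepresenting algebra for `T ↦ M ⊗[R] T` when `M` is a retract of `Rⁿ`. -/
noncomputable def corep (hrs : r.comp s = LinearMap.id) :
    TensorCorepresentation.{0, 0, 0, 0} R M where
  A := MvPolynomial (Fin n) R ⧸ Ideal.span (Set.range (relPoly r s))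
  equiv T _ _ :=
    { toFun := fun φ => betaL r T fun i =>
        φ (Ideal.Quotient.mkₐ R (Ideal.span (Set.range (relPoly r s))) (MvPolynomial.X i))
      invFun := fun x => Ideal.Quotient.liftₐ _
        (MvPolynomial.aeval fun i => gammaL s T x i) (liftable r s hrs x)
      left_inv := by
        intro φ
        apply Ideal.Quotient.algHom_ext
        apply MvPolynomial.algHom_ext
        intro i
        let I := Ideal.span (Set.range (relPoly r s))
        have hmem : relPoly r s i ∈ I := Ideal.subset_span ⟨i, rfl⟩
        have h0 : (φ.comp (Ideal.Quotient.mkₐ R I)) (relPoly r s i) = 0 := by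
          simp only [AlgHom.comp_apply, Ideal.Quotient.mkₐ_eq_mk,
            Ideal.Quotient.eq_zero_iff_mem.mpr hmem, map_zero]
        rw [MvPolynomial.aeval_unique (φ.comp (Ideal.Quotient.mkₐ R I))] at h0
        rw [aeval_relPoly] at h0
        have key := sub_eq_zero.mp h0
        simp only [AlgHom.comp_apply, Ideal.Quotient.liftₐ_apply, Ideal.Quotient.mkₐ_eq_mk,
          Ideal.Quotient.lift_mk, AlgHom.coe_toRingHom, RingHom.coe_coe, MvPolynomial.aeval_X]
        erw [Ideal.Quotient.lift_mk]
        simp only [RingHom.coe_coe, MvPolynomial.aeval_X]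
        exact key
      right_inv := by
        intro x
        simp only [Ideal.Quotient.liftₐ_apply, Ideal.Quotient.mkₐ_eq_mk,
          Ideal.Quotient.lift_mk, AlgHom.coe_toRingHom, RingHom.coe_coe, MvPolynomial.aeval_X]
        convert beta_gamma r s T hrs x using 2
        funext i
        erw [Ideal.Quotient.lift_mk]
        simp only [RingHom.coe_coe, MvPolynomial.aeval_X] }
  naturality T _ _ T' _ _ f φ := by
    simp only [Equiv.coe_fn_mk, AlgHom.comp_apply]
    rw [betaL_apply, betaL_apply, map_sum]
    simp [LinearMap.lTensor_tmul]

end Aux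

/-- Let `R` be a commutative noetherian ring and `M` a finitely generated `R`-module.
The set-valued covariant functor `T ↦ M ⊗[R] T` on commutative `R`-algebras is
corepresentable if and only if `M` is a projective `R`-module. -/
theorem tensor_functor_corepresentable_iff_projective
    (R : Type) [CommRing R] [IsNoetherianRing R]
    (M : Type) [AddCommGroup M] [Module R M] [Module.Finite R M] :
    Nonempty (TensorCorepresentation.{0, 0, 0, 0} R M) ↔ Module.Projective R M := by
  constructor
  · rintro ⟨C⟩
    letI := C.commRingA
    letI := C.algebraA
    have hflat : Module.Flat R M := by
      rw [Module.Flat.iff_lTensor_preserves_injective_linearMap]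
      intro N N' _ _ _ _ f hf
      letI : Module Rᵐᵒᵖ N := Module.compHom N ((RingHom.id R).fromOpposite mul_comm)
      letI : Module Rᵐᵒᵖ N' := Module.compHom N' ((RingHom.id R).fromOpposite mul_comm)
      letI : IsCentralScalar R N := ⟨fun r n => rfl⟩
      letI : IsCentralScalar R N' := ⟨fun r n => rfl⟩
      set F : TrivSqZeroExt R N →ₐ[R] TrivSqZeroExt R N' := TrivSqZeroExt.map f with hF
      have hFinj : Function.Injective F := by
        intro x y hxy
        have h1 := congrArg TrivSqZeroExt.fst hxy
        have h2 := congrArg TrivSqZeroExt.snd hxy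
        simp only [hF, TrivSqZeroExt.fst_map, TrivSqZeroExt.snd_map] at h1 h2
        exact TrivSqZeroExt.ext h1 (hf h2)
      have hFTinj : Function.Injective (LinearMap.lTensor M F.toLinearMap) := by
        intro u v huv
        have h1 : F.comp ((C.equiv _).symm u) = F.comp ((C.equiv _).symm v) := by
          apply (C.equiv _).injective
          rw [C.naturality, C.naturality, Equiv.apply_symm_apply, Equiv.apply_symm_apply, huv]
        have h2 : (C.equiv _).symm u = (C.equiv _).symm v :=
          AlgHom.ext fun a => hFinj (AlgHom.congr_fun h1 a)
        have := congrArg (C.equiv _) h2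
        simpa using this
      intro x y hxy
      have hcomp : F.toLinearMap ∘ₗ TrivSqZeroExt.inrHom R N
          = (TrivSqZeroExt.inrHom R N') ∘ₗ f := TrivSqZeroExt.map_comp_inrHom f
      have key : LinearMap.lTensor M (TrivSqZeroExt.inrHom R N) x
          = LinearMap.lTensor M (TrivSqZeroExt.inrHom R N) y := by
        apply hFTinj
        rw [← LinearMap.lTensor_comp_apply, ← LinearMap.lTensor_comp_apply, hcomp,
          LinearMap.lTensor_comp_apply, LinearMap.lTensor_comp_apply, hxy]
      have hsnd : (TrivSqZeroExt.sndHom R N) ∘ₗ (TrivSqZeroExt.inrHom R N)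
          = LinearMap.id := by
        ext z
        simp
      calc x = LinearMap.lTensor M ((TrivSqZeroExt.sndHom R N) ∘ₗ
              (TrivSqZeroExt.inrHom R N)) x := by rw [hsnd, LinearMap.lTensor_id]; rfl
        _ = LinearMap.lTensor M (TrivSqZeroExt.sndHom R N)
              (LinearMap.lTensor M (TrivSqZeroExt.inrHom R N) x) := by
            rw [LinearMap.lTensor_comp_apply]
        _ = LinearMap.lTensor M (TrivSqZeroExt.sndHom R N)
              (LinearMap.lTensor M (TrivSqZeroExt.inrHom R N) y) := by rw [key]
        _ = y := by rw [← LinearMap.lTensor_comp_apply, hsnd, LinearMap.lTensor_id]; rfl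
    haveI := Module.finitePresentation_of_finite R M
    apply Module.projective_of_localization_maximal
    intro I hI
    haveI : Module.Flat (Localization.AtPrime I) (LocalizedModule I.primeCompl M) :=
      inferInstance
    haveI : Module.Free (Localization.AtPrime I) (LocalizedModule I.primeCompl M) :=
      Module.free_of_flat_of_isLocalRing
    infer_instance
  · intro hP
    obtain ⟨n, r, hr⟩ := Module.Finite.exists_fin' R M
    obtain ⟨s, hs⟩ := Module.projective_lifting_property r LinearMap.id hr
    exact ⟨corep r s hs⟩
end

section
/- Let R be a noetherian local ring with maximal ideal m and residue field k = R/m, and let M be a finitely generated R-module. Let d = dim_k(M/mM), and suppose given a right-exact sequence of R-modules R^δ →ψ R^d → M → 0 in which the d standard basis vectors of R^d map to a minimal generating set of M (equivalently, the induced map k^d → M/mM is an isomorphism). Let I ⊆ R be the ideal generated by the entries of the d × δ matrix of ψ. Then for every ideal J ⊆ R, the R/J-module M/JM is free if and only if I ⊆ J. -/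
open IsLocalRing

private lemma mem_smul_top_pi_iff {R : Type*} [CommRing R] {n : ℕ} (J : Ideal R)
    (v : Fin n → R) :
    v ∈ J • (⊤ : Submodule R (Fin n → R)) ↔ ∀ i, v i ∈ J := by
  constructor
  · intro hv i
    refine Submodule.smul_induction_on hv (fun r hr x _ => ?_) (fun x y hx hy => ?_)
    · simpa using J.mul_mem_right (x i) hr
    · exact J.add_mem hx hy
  · intro h
    have hv : v = ∑ i, v i • (Pi.single i 1 : Fin n → R) := by
      have h0 := Finset.univ_sum_single v
      rw [← h0]
      refine Finset.sum_congr rfl fun i _ => ?_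
      funext j
      simp [Pi.single_apply]
    rw [hv]
    exact Submodule.sum_mem _ fun i _ => Submodule.smul_mem_smul (h i) trivial

/-- Let `R` be a noetherian local ring with maximal ideal `m`, and `M` a finitely
generated `R`-module.  Suppose `R^δ →ψ R^d →g M → 0` is a right-exact sequence
(`g` surjective, `range ψ = ker g`) in which the standard basis of `R^d` maps to a
minimal generating set of `M`; equivalently, the induced map `k^d → M/mM` is an
isomorphism, which (given surjectivity of `g`) amounts to the kernel of the composite
`R^d → M → M/mM` being exactly `m·R^d`.  Let `I` be the ideal generated by the
entries of the matrix of `ψ`.  Then for every ideal `J ⊆ R`, the `R/J`-module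
`M/JM` is free if and only if `I ⊆ J`. -/
theorem flattening_ideal_universal_property
    (R : Type*) [CommRing R] [IsNoetherianRing R] [IsLocalRing R]
    (M : Type*) [AddCommGroup M] [Module R M] [Module.Finite R M]
    (d δ : ℕ) (ψ : (Fin δ → R) →ₗ[R] (Fin d → R)) (g : (Fin d → R) →ₗ[R] M)
    (hg : Function.Surjective g)
    (hexact : LinearMap.range ψ = LinearMap.ker g)
    (hmin : LinearMap.ker ((maximalIdeal R • (⊤ : Submodule R M)).mkQ.comp g)
      = (maximalIdeal R • (⊤ : Submodule R (Fin d → R))))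
    (I : Ideal R)
    (hI : I = Ideal.span {r : R | ∃ p : Fin d × Fin δ, ψ (Pi.single p.2 1) p.1 = r}) :
    ∀ J : Ideal R, Module.Free (R ⧸ J) (M ⧸ (J • (⊤ : Submodule R M))) ↔ I ≤ J := by
  intro J
  -- the reduced presentation map
  set gbar : (Fin d → R) →ₗ[R] (M ⧸ (J • (⊤ : Submodule R M))) :=
    (J • (⊤ : Submodule R M)).mkQ.comp g with hgbar
  have hgbar_surj : Function.Surjective gbar :=
    (Submodule.mkQ_surjective _).comp hg
  -- kernel of the reduced map
  have hker_gbar : LinearMap.ker gbar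
      = J • (⊤ : Submodule R (Fin d → R)) ⊔ LinearMap.ker g := by
    have h1 : LinearMap.ker gbar = Submodule.comap g (J • (⊤ : Submodule R M)) := by
      rw [hgbar, LinearMap.ker_comp, Submodule.ker_mkQ]
    have h2 : (J • (⊤ : Submodule R M))
        = Submodule.map g (J • (⊤ : Submodule R (Fin d → R))) := by
      rw [Submodule.map_smul'', Submodule.map_top, LinearMap.range_eq_top.2 hg]
    rw [h1, h2, Submodule.comap_map_eq]
  -- the kernel of g is small
  have hkg : LinearMap.ker g ≤ maximalIdeal R • (⊤ : Submodule R (Fin d → R)) := by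
    rw [← hmin]; exact LinearMap.ker_le_ker_comp _ _
  -- equivalence between `I ≤ J` and `range ψ ≤ J • ⊤`
  have hIJ : I ≤ J ↔ LinearMap.range ψ ≤ J • (⊤ : Submodule R (Fin d → R)) := by
    constructor
    · intro hle
      rintro _ ⟨x, rfl⟩
      have hx : x = ∑ j, x j • (Pi.single j 1 : Fin δ → R) := by
        have h0 := Finset.univ_sum_single x
        rw [← h0]
        refine Finset.sum_congr rfl fun j _ => ?_
        funext i
        simp [Pi.single_apply]
      rw [hx, map_sum]
      refine Submodule.sum_mem _ fun j _ => ?_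
      rw [map_smul]
      refine Submodule.smul_mem _ _ ?_
      rw [mem_smul_top_pi_iff]
      intro i
      exact hle (hI ▸ Ideal.subset_span ⟨(i, j), rfl⟩)
    · intro hle
      rw [hI, Ideal.span_le]
      rintro _ ⟨⟨i, j⟩, rfl⟩
      exact (mem_smul_top_pi_iff J _).1 (hle ⟨Pi.single j 1, rfl⟩) i
  constructor
  · -- free implies I ≤ J
    intro hfree
    by_cases hJ : J = ⊤
    · exact hJ ▸ le_top
    -- set up the local ring R/J
    haveI : Nontrivial (R ⧸ J) := Ideal.Quotient.nontrivial_iff.mpr hJ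
    haveI : IsLocalRing (R ⧸ J) :=
      IsLocalRing.of_surjective' (Ideal.Quotient.mk J) Ideal.Quotient.mk_surjective
    set S := R ⧸ J
    have hsurjS : Function.Surjective (algebraMap R S) := Ideal.Quotient.mk_surjective
    set N := M ⧸ (J • (⊤ : Submodule R M))
    set Q := (Fin d → R) ⧸ (J • (⊤ : Submodule R (Fin d → R)))
    -- induced S-linear surjection Q → N
    have hJker : J • (⊤ : Submodule R (Fin d → R)) ≤ LinearMap.ker gbar := by
      rw [hker_gbar]; exact le_sup_left
    set gQ : Q →ₗ[R] N := (J • (⊤ : Submodule R (Fin d → R))).liftQ gbar hJker with hgQ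
    set gS : Q →ₗ[S] N := gQ.extendScalarsOfSurjective hsurjS with hgS
    have hgS_surj : Function.Surjective gS := by
      intro y
      obtain ⟨x, hx⟩ := hgbar_surj y
      exact ⟨Submodule.Quotient.mk x, hx⟩
    -- splitting from projectivity of N
    haveI : Module.Projective S N := inferInstance
    obtain ⟨s, hs⟩ := Module.projective_lifting_property gS (LinearMap.id)
      hgS_surj
    -- the idempotent-complement map onto the kernel
    set q : Q →ₗ[S] Q := LinearMap.id - s.comp gS with hq
    have hq_ker : ∀ x ∈ LinearMap.ker gS, q x = x := by
      intro x hx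
      simp only [hq, LinearMap.sub_apply, LinearMap.id_apply, LinearMap.comp_apply]
      rw [LinearMap.mem_ker.1 hx, map_zero, sub_zero]
    have hq_range : LinearMap.range q ≤ LinearMap.ker gS := by
      rintro _ ⟨x, rfl⟩
      simp only [hq, LinearMap.sub_apply, LinearMap.id_apply, LinearMap.comp_apply,
        LinearMap.mem_ker, map_sub]
      have : gS (s (gS x)) = gS x := congrArg (fun f => f (gS x)) hs
      rw [this, sub_self]
    -- the image of the maximal ideal of R in S
    set mS : Ideal S := (maximalIdeal R).map (Ideal.Quotient.mk J) with hmS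
    have hmS_ne : mS ≠ ⊤ := by
      intro h
      have hJm : J ≤ maximalIdeal R := le_maximalIdeal hJ
      have h1 : Ideal.comap (Ideal.Quotient.mk J) mS = ⊤ := by
        rw [h]; exact Ideal.comap_top
      rw [hmS, Ideal.comap_map_of_surjective _ Ideal.Quotient.mk_surjective] at h1
      have h2 : Ideal.comap (Ideal.Quotient.mk J) ⊥ = J := by
        rw [← RingHom.ker_eq_comap_bot, Ideal.mk_ker]
      rw [h2, sup_eq_left.2 hJm] at h1
      exact (maximalIdeal.isMaximal R).ne_top h1
    -- kernel of gS is contained in mS • ⊤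
    have hkerS : LinearMap.ker gS ≤ mS • (⊤ : Submodule S Q) := by
      intro x hx
      obtain ⟨y, rfl⟩ := Submodule.mkQ_surjective _ x
      have hy : y ∈ LinearMap.ker gbar := by
        exact hx
      have hy' : y ∈ maximalIdeal R • (⊤ : Submodule R (Fin d → R)) := by
        rw [hker_gbar] at hy
        exact sup_le (Submodule.smul_mono_left (le_maximalIdeal hJ)) hkg hy
      -- push forward through the quotient map
      refine Submodule.smul_induction_on hy' (fun r hr z _ => ?_) (fun a b ha hb => ?_)
      · have h3 : (Submodule.Quotient.mk (r • z) : Q)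
            = (Ideal.Quotient.mk J r) • (Submodule.Quotient.mk z : Q) := rfl
        rw [Submodule.mkQ_apply, h3]
        exact Submodule.smul_mem_smul (Ideal.mem_map_of_mem _ hr) trivial
      · rw [Submodule.mkQ_apply, Submodule.Quotient.mk_add]
        rw [Submodule.mkQ_apply] at ha hb
        exact Submodule.add_mem _ ha hb
    -- the kernel, as an S-submodule, satisfies Nakayama
    set K : Submodule S Q := LinearMap.ker gS with hK
    have hKfg : K.FG := by
      haveI : Module.Finite R Q := Module.Finite.quotient R _
      haveI : Module.Finite S Q := Module.Finite.of_restrictScalars_finite R S Q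
      haveI : IsNoetherianRing S := Ideal.Quotient.isNoetherianRing J
      haveI : IsNoetherian S Q := isNoetherian_of_isNoetherianRing_of_finite S Q
      exact IsNoetherian.noetherian K
    have hKle : K ≤ mS • K := by
      intro x hx
      have h1 : x ∈ mS • (⊤ : Submodule S Q) := hkerS hx
      have h2 : x = q x := (hq_ker x hx).symm
      rw [h2]
      have : q x ∈ Submodule.map q (mS • (⊤ : Submodule S Q)) := ⟨x, h1, rfl⟩
      rw [Submodule.map_smul''] at this
      refine Submodule.smul_mono le_rfl ?_ this
      rw [Submodule.map_top]
      exact hq_range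
    have hKbot : K = ⊥ :=
      Submodule.eq_bot_of_le_smul_of_le_jacobson_bot mS K hKfg hKle
        (by rw [jacobson_eq_maximalIdeal ⊥ bot_ne_top]; exact le_maximalIdeal hmS_ne)
    -- conclude range ψ ≤ J • ⊤
    rw [hIJ, hexact]
    intro x hx
    have hx' : x ∈ LinearMap.ker gbar := by
      rw [hker_gbar]; exact Submodule.mem_sup_right hx
    have : Submodule.Quotient.mk (p := J • (⊤ : Submodule R (Fin d → R))) x ∈ K := by
      simpa [hK, hgS, hgQ] using hx'
    rw [hKbot, Submodule.mem_bot] at this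
    exact (Submodule.Quotient.mk_eq_zero _).1 this
  · -- I ≤ J implies free
    intro hle
    set S := R ⧸ J
    have hsurjS : Function.Surjective (algebraMap R S) := Ideal.Quotient.mk_surjective
    -- kernel of gbar is exactly J • ⊤
    have hker : LinearMap.ker gbar = J • (⊤ : Submodule R (Fin d → R)) := by
      rw [hker_gbar, ← hexact, sup_eq_left]
      exact hIJ.1 hle
    -- componentwise quotient map
    set p : (Fin d → R) →ₗ[R] (Fin d → S) :=
      LinearMap.pi (fun i => (Algebra.linearMap R S).comp (LinearMap.proj i)) with hp
    have hp_surj : Function.Surjective p := by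
      intro v
      choose w hw using fun i => hsurjS (v i)
      exact ⟨w, funext hw⟩
    have hp_ker : LinearMap.ker p = J • (⊤ : Submodule R (Fin d → R)) := by
      ext v
      rw [mem_smul_top_pi_iff]
      simp only [LinearMap.mem_ker, hp]
      have hpv : ∀ i, p v i = Ideal.Quotient.mk J (v i) := fun i => rfl
      constructor
      · intro h i
        have h4 : p v i = 0 := by rw [h]; rfl
        rw [hpv i] at h4
        exact Ideal.Quotient.eq_zero_iff_mem.1 h4
      · intro h
        funext i
        show p v i = 0
        rw [hpv i]
        exact Ideal.Quotient.eq_zero_iff_mem.2 (h i)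
    -- build the R-linear equivalence (Fin d → S) ≃ M/JM
    have e1 : ((Fin d → R) ⧸ (J • (⊤ : Submodule R (Fin d → R)))) ≃ₗ[R] (Fin d → S) :=
      (Submodule.quotEquivOfEq _ _ hp_ker.symm).trans (p.quotKerEquivOfSurjective hp_surj)
    have e2 : ((Fin d → R) ⧸ (J • (⊤ : Submodule R (Fin d → R)))) ≃ₗ[R]
        (M ⧸ (J • (⊤ : Submodule R M))) :=
      (Submodule.quotEquivOfEq _ _ hker.symm).trans
        (gbar.quotKerEquivOfSurjective hgbar_surj)
    have e : (Fin d → S) ≃ₗ[S] (M ⧸ (J • (⊤ : Submodule R M))) :=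
      (e1.symm.trans e2).extendScalarsOfSurjective hsurjS
    exact Module.Free.of_equiv e
end

section
/- Let R be a noetherian local ring with maximal ideal m and residue field k, and let M be a finitely generated R-module with d = dim_k(M/mM). Suppose R^{δ₁} →ψ₁ R^d → M → 0 and R^{δ₂} →ψ₂ R^d → M → 0 are two right-exact sequences in which, in each case, the standard basis of R^d maps to a minimal generating set of M. Let I₁ and I₂ be the ideals of R generated by the matrix entries of ψ₁ and ψ₂ respectively. Then I₁ = I₂. -/
open IsLocalRing

/-- The coordinate ideal of a submodule of `R^d`. -/
private def coordIdeal {R : Type*} [CommRing R] {d : ℕ} (N : Submodule R (Fin d → R)) :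
    Ideal R :=
  Ideal.span {r : R | ∃ x ∈ N, ∃ i, x i = r}

private lemma apply_eq_sum {R : Type*} [CommRing R] {n d : ℕ}
    (f : (Fin n → R) →ₗ[R] (Fin d → R)) (v : Fin n → R) (i : Fin d) :
    f v i = ∑ j, v j * f (Pi.single j 1) i := by
  have hv : v = ∑ j, v j • (Pi.single j 1 : Fin n → R) := by
    ext k
    simp [Finset.sum_apply, Pi.single_apply]
  conv_lhs => rw [hv]
  rw [map_sum]
  simp [Finset.sum_apply]

private lemma entries_span_eq {R : Type*} [CommRing R] {n d : ℕ}
    (f : (Fin n → R) →ₗ[R] (Fin d → R)) :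
    Ideal.span {r : R | ∃ p : Fin d × Fin n, f (Pi.single p.2 1) p.1 = r}
      = coordIdeal (LinearMap.range f) := by
  apply le_antisymm
  · rw [Ideal.span_le]
    rintro r ⟨⟨i, j⟩, rfl⟩
    exact Ideal.subset_span ⟨f (Pi.single j 1), ⟨Pi.single j 1, rfl⟩, i, rfl⟩
  · rw [coordIdeal, Ideal.span_le]
    rintro r ⟨x, ⟨v, rfl⟩, i, rfl⟩
    rw [apply_eq_sum]
    apply Ideal.sum_mem
    intro j _
    exact Ideal.mul_mem_left _ _ (Ideal.subset_span ⟨(i, j), rfl⟩)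

private lemma coordIdeal_map_le {R : Type*} [CommRing R] {d : ℕ}
    (e : (Fin d → R) →ₗ[R] (Fin d → R)) (N : Submodule R (Fin d → R)) :
    coordIdeal (N.map e) ≤ coordIdeal N := by
  rw [coordIdeal, Ideal.span_le]
  rintro r ⟨x, ⟨y, hy, rfl⟩, i, rfl⟩
  rw [apply_eq_sum]
  apply Ideal.sum_mem
  intro j _
  rw [mul_comm]
  exact Ideal.mul_mem_left _ _ (Ideal.subset_span ⟨y, hy, j, rfl⟩)

/-- Let `R` be a noetherian local ring with maximal ideal `m` and `M` a finitely
generated `R`-module.  Given two right-exact sequences `R^δ₁ →ψ₁ R^d →g₁ M → 0` and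
`R^δ₂ →ψ₂ R^d →g₂ M → 0` in which, in each case, the standard basis of `R^d` maps
to a minimal generating set of `M` (equivalently, the induced maps `k^d → M/mM` are
isomorphisms, i.e. the `gᵢ` are surjective and the kernels of the composites
`R^d → M → M/mM` are exactly `m·R^d`), the ideals `I₁` and `I₂` generated by the
matrix entries of `ψ₁` and `ψ₂` respectively are equal. -/
theorem flattening_ideal_well_defined
    (R : Type*) [CommRing R] [IsNoetherianRing R] [IsLocalRing R]
    (M : Type*) [AddCommGroup M] [Module R M] [Module.Finite R M]
    (d δ₁ δ₂ : ℕ)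
    (ψ₁ : (Fin δ₁ → R) →ₗ[R] (Fin d → R)) (g₁ : (Fin d → R) →ₗ[R] M)
    (ψ₂ : (Fin δ₂ → R) →ₗ[R] (Fin d → R)) (g₂ : (Fin d → R) →ₗ[R] M)
    (hg₁ : Function.Surjective g₁)
    (hexact₁ : LinearMap.range ψ₁ = LinearMap.ker g₁)
    (hmin₁ : LinearMap.ker ((maximalIdeal R • (⊤ : Submodule R M)).mkQ.comp g₁)
      = (maximalIdeal R • (⊤ : Submodule R (Fin d → R))))
    (hg₂ : Function.Surjective g₂)
    (hexact₂ : LinearMap.range ψ₂ = LinearMap.ker g₂)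
    (hmin₂ : LinearMap.ker ((maximalIdeal R • (⊤ : Submodule R M)).mkQ.comp g₂)
      = (maximalIdeal R • (⊤ : Submodule R (Fin d → R))))
    (I₁ I₂ : Ideal R)
    (hI₁ : I₁ = Ideal.span {r : R | ∃ p : Fin d × Fin δ₁, ψ₁ (Pi.single p.2 1) p.1 = r})
    (hI₂ : I₂ = Ideal.span {r : R | ∃ p : Fin d × Fin δ₂, ψ₂ (Pi.single p.2 1) p.1 = r}) :
    I₁ = I₂ := by
  -- lift `g₁` through the surjection `g₂` using projectivity of `R^d`
  obtain ⟨f, hf⟩ := Module.projective_lifting_property g₂ g₁ hg₂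
  -- `ker g₂ ≤ m • ⊤`
  have hker₂ : LinearMap.ker g₂ ≤ maximalIdeal R • (⊤ : Submodule R (Fin d → R)) := by
    rw [← hmin₂]
    exact LinearMap.ker_le_ker_comp g₂ _
  -- `f` is surjective by Nakayama
  have htop : (⊤ : Submodule R (Fin d → R)) ≤
      LinearMap.range f ⊔ maximalIdeal R • (⊤ : Submodule R (Fin d → R)) := by
    intro y _
    obtain ⟨x, hx⟩ := hg₁ (g₂ y)
    refine Submodule.mem_sup.2 ⟨f x, ⟨x, rfl⟩, y - f x, hker₂ ?_, by abel⟩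
    have : g₂ (f x) = g₁ x := by rw [← hf]; rfl
    simp [LinearMap.mem_ker, map_sub, this, hx]
  have hsurj : Function.Surjective f := by
    rw [← LinearMap.range_eq_top]
    exact top_le_iff.mp (Submodule.le_of_le_smul_of_le_jacobson_bot
      Module.Finite.fg_top (IsLocalRing.maximalIdeal_le_jacobson ⊥) htop)
  have hinj : Function.Injective f :=
    OrzechProperty.injective_of_surjective_endomorphism f hsurj
  let e : (Fin d → R) ≃ₗ[R] (Fin d → R) := LinearEquiv.ofBijective f ⟨hinj, hsurj⟩
  -- `f` carries `ker g₁` onto `ker g₂`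
  have hker₁ : LinearMap.ker g₁ = (LinearMap.ker g₂).comap f := by
    rw [← hf, LinearMap.ker_comp]
  have hmap : (LinearMap.ker g₁).map f = LinearMap.ker g₂ := by
    rw [hker₁, Submodule.map_comap_eq_of_surjective hsurj]
  have hmap' : (LinearMap.ker g₂).map (e.symm : (Fin d → R) →ₗ[R] (Fin d → R))
      = LinearMap.ker g₁ := by
    ext x
    constructor
    · rintro ⟨y, hy, rfl⟩
      rw [hker₁]
      have h' : f (e.symm y) = y := e.apply_symm_apply y
      simpa [e, LinearMap.mem_ker, h'] using hy
    · intro hx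
      refine ⟨f x, ?_, ?_⟩
      · rw [← hmap]; exact ⟨x, hx, rfl⟩
      · exact (LinearEquiv.symm_apply_eq e).mpr rfl
  -- conclude
  rw [hI₁, hI₂, entries_span_eq, entries_span_eq, hexact₁, hexact₂]
  apply le_antisymm
  · rw [← hmap']
    exact coordIdeal_map_le _ _
  · rw [← hmap]
    exact coordIdeal_map_le _ _
end

section
/- (Lemma of Srinivas) Let R be an artinian local ring with maximal ideal m, and let I ⊆ R be a nonzero proper principal ideal with mI = 0. Let M be a finitely generated R-module such that for every ideal J ⊆ R, the R/J-module M/JM is free if and only if I ⊆ J (i.e., the flattening stratification of M is defined by I). Then there exist an integer i ≥ 0 and an integer j > 0 such that M is isomorphic as an R-module to R^i ⊕ (R/I)^j. -/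
open IsLocalRing

section Aux

/-- Nakayama: if `N ⊔ I•⊤ = ⊤` with `I` in the Jacobson radical and `M` finite, then `N = ⊤`. -/
lemma nak_top {R M : Type*} [CommRing R] [AddCommGroup M] [Module R M] [Module.Finite R M]
    {I : Ideal R} (hI : I ≤ Ideal.jacobson ⊥) {N : Submodule R M}
    (h : ⊤ ≤ N ⊔ I • (⊤ : Submodule R M)) : N = ⊤ :=
  top_le_iff.mp (Submodule.le_of_le_smul_of_le_jacobson_bot (Module.finite_def.mp ‹_›) hI h)

end Aux

set_option maxHeartbeats 1000000 in
/-- (Lemma of Srinivas) Let `R` be an artinian local ring with maximal ideal `m`, and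
let `I ⊆ R` be a nonzero proper principal ideal with `m·I = 0`.  Let `M` be a finitely
generated `R`-module whose flattening stratification is defined by `I`, i.e. for every
ideal `J ⊆ R` the `R/J`-module `M/JM` is free if and only if `I ⊆ J`.  Then there are
integers `i ≥ 0` and `j > 0` such that `M ≅ R^i ⊕ (R/I)^j` as `R`-modules. -/
theorem srinivas_lemma
    (R : Type*) [CommRing R] [IsArtinianRing R] [IsLocalRing R]
    (I : Ideal R) (hI0 : I ≠ ⊥) (hItop : I ≠ ⊤) (hIprin : I.IsPrincipal)
    (hmI : maximalIdeal R * I = ⊥)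
    (M : Type*) [AddCommGroup M] [Module R M] [Module.Finite R M]
    (hflat : ∀ J : Ideal R,
      Module.Free (R ⧸ J) (M ⧸ (J • (⊤ : Submodule R M))) ↔ I ≤ J) :
    ∃ (i j : ℕ), 0 < j ∧
      Nonempty (M ≃ₗ[R] (Fin i → R) × (Fin j → R ⧸ I)) := by
  classical
  obtain ⟨t, ht⟩ := hIprin.principal
  have htI : t ∈ I := by rw [ht]; exact Submodule.mem_span_singleton_self t
  have hIm : I ≤ maximalIdeal R := le_maximalIdeal hItop
  have htm : ∀ a ∈ maximalIdeal R, a * t = 0 := by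
    intro a ha
    have : a * t ∈ maximalIdeal R * I := Ideal.mul_mem_mul ha htI
    rw [hmI] at this
    exact Ideal.mem_bot.mp this
  have hIjac : I ≤ Ideal.jacobson ⊥ := by
    rw [jacobson_eq_maximalIdeal ⊥ bot_ne_top]; exact hIm
  have hmjac : maximalIdeal R ≤ Ideal.jacobson ⊥ := by
    rw [jacobson_eq_maximalIdeal ⊥ bot_ne_top]
  -- the free `R/I`-module `M/IM`
  haveI hfree : Module.Free (R ⧸ I) (M ⧸ (I • (⊤ : Submodule R M))) := (hflat I).mpr le_rfl
  haveI : Module.Finite (R ⧸ I) (M ⧸ (I • (⊤ : Submodule R M))) :=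
    Module.Finite.of_restrictScalars_finite R _ _
  set ι := Module.Free.ChooseBasisIndex (R ⧸ I) (M ⧸ (I • (⊤ : Submodule R M))) with hι
  let b : Module.Basis ι (R ⧸ I) (M ⧸ (I • (⊤ : Submodule R M))) := Module.Free.chooseBasis _ _
  -- lift the basis to `M`
  have hxex : ∀ i : ι, ∃ y : M, Submodule.Quotient.mk y = b i := fun i =>
    Submodule.Quotient.mk_surjective _ (b i)
  choose x hx using hxex
  let φ : (ι → R) →ₗ[R] M := Fintype.linearCombination R x
  have hφapp : ∀ v : ι → R, φ v = ∑ i, v i • x i := fun v => rfl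
  have hmkφ : ∀ v : ι → R,
      (Submodule.Quotient.mk (φ v) : M ⧸ (I • (⊤ : Submodule R M))) =
        ∑ i, Ideal.Quotient.mk I (v i) • b i := by
    intro v
    rw [hφapp, show (Submodule.Quotient.mk (∑ i, v i • x i) : M ⧸ (I • (⊤ : Submodule R M)))
      = Submodule.mkQ _ (∑ i, v i • x i) from rfl, map_sum]
    refine Finset.sum_congr rfl fun i _ => ?_
    rw [Submodule.mkQ_apply, ← hx i, Module.Quotient.mk_smul_mk]
  -- surjectivity of φ
  have hrange : LinearMap.range φ = Submodule.span R (Set.range x) :=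
    Fintype.range_linearCombination R x
  have hspan : Submodule.span R (Set.range x) = ⊤ := by
    apply nak_top hIjac
    intro y _
    set c : ι → R := fun i =>
      Function.surjInv Ideal.Quotient.mk_surjective
        (b.repr (Submodule.Quotient.mk y) i) with hc
    have hc' : ∀ i, Ideal.Quotient.mk I (c i) = b.repr (Submodule.Quotient.mk y) i :=
      fun i => Function.surjInv_eq Ideal.Quotient.mk_surjective _
    have hmk : (Submodule.Quotient.mk (φ c) : M ⧸ (I • (⊤ : Submodule R M)))
        = Submodule.Quotient.mk y := by
      rw [hmkφ]
      simp_rw [hc']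
      exact b.sum_repr _
    have hsub : y - φ c ∈ I • (⊤ : Submodule R M) :=
      (Submodule.Quotient.eq _).mp hmk.symm
    have hφc : φ c ∈ Submodule.span R (Set.range x) := by
      rw [← hrange]; exact LinearMap.mem_range_self φ c
    have : y = φ c + (y - φ c) := by abel
    rw [this]
    exact Submodule.add_mem_sup hφc hsub
  have hsurj : Function.Surjective φ := by
    rw [← LinearMap.range_eq_top, hrange, hspan]
  set K := LinearMap.ker φ with hK
  -- elements of the kernel have coordinates in I
  have hkerI : ∀ v ∈ K, ∀ i, v i ∈ I := by
    intro v hv i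
    have h0 : (Submodule.Quotient.mk (φ v) : M ⧸ (I • (⊤ : Submodule R M))) = 0 := by
      rw [LinearMap.mem_ker.mp hv, Submodule.Quotient.mk_zero]
    rw [hmkφ] at h0
    have := Fintype.linearIndependent_iff.mp b.linearIndependent
      (fun i => Ideal.Quotient.mk I (v i)) h0 i
    exact Ideal.Quotient.eq_zero_iff_mem.mp this
  -- the residue field picture
  haveI : RingHomSurjective (residue R) := ⟨residue_surjective⟩
  let pL : (ι → R) →ₛₗ[residue R] (ι → ResidueField R) :=
    { toFun := fun v i => residue R (v i)
      map_add' := fun v w => funext fun i => map_add _ _ _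
      map_smul' := fun c v => funext fun i => map_mul _ _ _ }
  have hpLapp : ∀ (v : ι → R) (i : ι), pL v i = residue R (v i) := fun _ _ => rfl
  have hker_pL_t : ∀ v : ι → R, pL v = 0 → t • v = 0 := by
    intro v hv
    funext i
    have hvm : v i ∈ maximalIdeal R := by
      have : residue R (v i) = 0 := congrFun hv i
      exact Ideal.Quotient.eq_zero_iff_mem.mp this
    show t * v i = 0
    rw [mul_comm]
    exact htm _ hvm
  have hkerm : LinearMap.ker pL ≤ (maximalIdeal R) • (⊤ : Submodule R (ι → R)) := by
    intro z hz
    have hzm : ∀ i, z i ∈ maximalIdeal R := fun i =>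
      Ideal.Quotient.eq_zero_iff_mem.mp (congrFun (LinearMap.mem_ker.mp hz) i)
    have hzeq : z = ∑ i, z i • (Pi.single i (1 : R) : ι → R) := by
      funext j
      rw [Finset.sum_apply]
      simp [Pi.single_apply]
    rw [hzeq]
    exact Submodule.sum_mem _ fun i _ =>
      Submodule.smul_mem_smul (hzm i) Submodule.mem_top
  set U := K.comap (LinearMap.lsmul R (ι → R) t) with hU
  set V := U.map pL with hV
  have hkerU : LinearMap.ker pL ≤ U := by
    intro v hv
    show t • v ∈ K
    rw [hker_pL_t v (LinearMap.mem_ker.mp hv)]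
    exact K.zero_mem
  have hUcomap : V.comap pL = U := by
    rw [hV, Submodule.comap_map_eq]
    exact sup_eq_left.mpr hkerU
  have hKt : ∀ v ∈ K, ∃ c, c ∈ U ∧ v = t • c := by
    intro v hv
    have hvi : ∀ i, v i ∈ Ideal.span {t} := fun i => by
      rw [Ideal.span, ← ht]; exact hkerI v hv i
    choose c hcmul using fun i => Ideal.mem_span_singleton'.mp (hvi i)
    have hveq : v = t • c := by
      funext i
      rw [Pi.smul_apply, smul_eq_mul, mul_comm]
      exact (hcmul i).symm
    refine ⟨c, ?_, hveq⟩
    show t • c ∈ K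
    rw [← hveq]; exact hv
  -- the kernel is nonzero
  have hKne : K ≠ ⊥ := by
    intro hKbot
    have hinj : Function.Injective φ := LinearMap.ker_eq_bot.mp hKbot
    let eφ : (ι → R) ≃ₗ[R] M := LinearEquiv.ofBijective φ ⟨hinj, hsurj⟩
    let e0 : (M ⧸ ((⊥ : Ideal R) • (⊤ : Submodule R M))) ≃ₗ[R] M :=
      Submodule.quotEquivOfEqBot _ (by simp)
    let b0 : Module.Basis ι R (M ⧸ ((⊥ : Ideal R) • (⊤ : Submodule R M))) :=
      (Pi.basisFun R ι).map (eφ.trans e0.symm)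
    let f : R ≃+* (R ⧸ (⊥ : Ideal R)) := (RingEquiv.quotientBot R).symm
    have hf : ∀ (c : R) (z : M ⧸ ((⊥ : Ideal R) • (⊤ : Submodule R M))), f c • z = c • z := by
      intro c z
      obtain ⟨y, rfl⟩ := Submodule.Quotient.mk_surjective _ z
      have hfc : f c = Ideal.Quotient.mk (⊥ : Ideal R) c := rfl
      rw [hfc, Module.Quotient.mk_smul_mk, Submodule.Quotient.mk_smul]
    haveI : Module.Free (R ⧸ (⊥ : Ideal R)) (M ⧸ ((⊥ : Ideal R) • (⊤ : Submodule R M))) :=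
      Module.Free.of_basis (b0.mapCoeffs f hf)
    exact hI0 (le_bot_iff.mp ((hflat ⊥).mp this))
  have hVne : V ≠ ⊥ := by
    intro hVbot
    apply hKne
    rw [Submodule.eq_bot_iff]
    intro v hv
    obtain ⟨c, hcU, rfl⟩ := hKt v hv
    have hcV : pL c ∈ V := Submodule.mem_map_of_mem hcU
    rw [hVbot, Submodule.mem_bot] at hcV
    exact hker_pL_t c hcV
  haveI : Nontrivial V := Submodule.nontrivial_iff_ne_bot.mpr hVne
  -- a complement of V and bases
  obtain ⟨W, hW⟩ := Submodule.exists_isCompl V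
  set σ := Module.Free.ChooseBasisIndex (ResidueField R) V with hσ
  set τ := Module.Free.ChooseBasisIndex (ResidueField R) W with hτ
  let bV : Module.Basis σ (ResidueField R) V := Module.Free.chooseBasis _ _
  let bW : Module.Basis τ (ResidueField R) W := Module.Free.chooseBasis _ _
  haveI : Nonempty σ := bV.index_nonempty
  let g : Module.Basis (τ ⊕ σ) (ResidueField R) (ι → ResidueField R) :=
    (bW.prod bV).map (Submodule.prodEquivOfIsCompl W V hW.symm)
  have hginr : ∀ s : σ, g (Sum.inr s) = (bV s : ι → ResidueField R) := by
    intro s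
    show Submodule.prodEquivOfIsCompl W V hW.symm ((bW.prod bV) (Sum.inr s))
      = (bV s : ι → ResidueField R)
    rw [Module.Basis.prod_apply]
    simp [Submodule.coe_prodEquivOfIsCompl]
  have hVspan : Submodule.span (ResidueField R)
      (Set.range fun s : σ => g (Sum.inr s)) = V := by
    have : (fun s : σ => g (Sum.inr s)) = V.subtype ∘ bV := funext fun s => hginr s
    rw [this, Set.range_comp, Submodule.span_image, bV.span_eq, Submodule.map_subtype_top]
  -- lift g to a basis of ι → R
  let u : τ ⊕ σ → (ι → R) := fun l i => Function.surjInv residue_surjective (g l i)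
  have hpLu : ∀ l, pL (u l) = g l := fun l =>
    funext fun i => Function.surjInv_eq residue_surjective _
  let e : (τ ⊕ σ → R) →ₗ[R] (ι → R) := Fintype.linearCombination R u
  have heapp : ∀ v : τ ⊕ σ → R, e v = ∑ l, v l • u l := fun v => rfl
  have hpLe : ∀ v : τ ⊕ σ → R, pL (e v) = ∑ l, residue R (v l) • g l := by
    intro v
    rw [heapp, map_sum]
    refine Finset.sum_congr rfl fun l _ => ?_
    rw [pL.map_smulₛₗ, hpLu]
  have herange : LinearMap.range e = Submodule.span R (Set.range u) :=
    Fintype.range_linearCombination R u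
  have hespan : Submodule.span R (Set.range u) = ⊤ := by
    apply nak_top hmjac
    intro v _
    set c : τ ⊕ σ → R := fun l =>
      Function.surjInv residue_surjective (g.repr (pL v) l) with hc
    have hc' : ∀ l, residue R (c l) = g.repr (pL v) l :=
      fun l => Function.surjInv_eq residue_surjective _
    have hpLec : pL (e c) = pL v := by
      rw [hpLe]
      simp_rw [hc']
      exact g.sum_repr _
    have hsub : v - e c ∈ LinearMap.ker pL := by
      rw [LinearMap.mem_ker, map_sub, hpLec, sub_self]
    have hec : e c ∈ Submodule.span R (Set.range u) := by
      rw [← herange]; exact LinearMap.mem_range_self e c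
    have : v = e c + (v - e c) := by abel
    rw [this]
    exact Submodule.add_mem_sup hec (hkerm hsub)
  have hesurj : Function.Surjective e := by
    rw [← LinearMap.range_eq_top, herange, hespan]
  -- cardinalities match
  have hcard : Fintype.card (τ ⊕ σ) = Fintype.card ι := by
    rw [Fintype.card_sum]
    have h1 : Fintype.card τ = Module.finrank (ResidueField R) W :=
      (Module.finrank_eq_card_chooseBasisIndex _ _).symm
    have h2 : Fintype.card σ = Module.finrank (ResidueField R) V :=
      (Module.finrank_eq_card_chooseBasisIndex _ _).symm
    have h3 : Module.finrank (ResidueField R) V + Module.finrank (ResidueField R) W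
        = Module.finrank (ResidueField R) (ι → ResidueField R) :=
      Submodule.finrank_add_eq_of_isCompl hW
    have h4 : Module.finrank (ResidueField R) (ι → ResidueField R) = Fintype.card ι :=
      Module.finrank_fintype_fun_eq_card _
    omega
  have heinj : Function.Injective e := by
    let q : (ι → R) ≃ₗ[R] (τ ⊕ σ → R) :=
      LinearEquiv.funCongrLeft R R (Fintype.equivOfCardEq hcard)
    have hsurj2 : Function.Surjective (e ∘ₗ q.toLinearMap) := hesurj.comp q.surjective
    have hinj2 : Function.Injective (e ∘ₗ q.toLinearMap) :=
      OrzechProperty.injective_of_surjective_endomorphism _ hsurj2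
    intro a b hab
    have : (e ∘ₗ q.toLinearMap) (q.symm a) = (e ∘ₗ q.toLinearMap) (q.symm b) := by
      simp only [LinearMap.comp_apply, LinearEquiv.coe_coe, q.apply_symm_apply]
      exact hab
    exact q.symm.injective (hinj2 this)
  let eE : (τ ⊕ σ → R) ≃ₗ[R] (ι → R) := LinearEquiv.ofBijective e ⟨heinj, hesurj⟩
  -- description of the kernel
  have hKdesc : K = Submodule.span R (Set.range fun s : σ => t • u (Sum.inr s)) := by
    apply le_antisymm
    · intro v hv
      obtain ⟨c, hcU, rfl⟩ := hKt v hv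
      have hcV : pL c ∈ V := Submodule.mem_map_of_mem hcU
      rw [← hVspan] at hcV
      obtain ⟨d, hd⟩ := (Submodule.mem_span_range_iff_exists_fun _).mp hcV
      let d' : σ → R := fun s => Function.surjInv residue_surjective (d s)
      have hd' : ∀ s, residue R (d' s) = d s :=
        fun s => Function.surjInv_eq residue_surjective _
      have h1 : pL (c - ∑ s, d' s • u (Sum.inr s)) = 0 := by
        rw [map_sub, map_sum]
        have : ∀ s : σ, pL (d' s • u (Sum.inr s)) = d s • g (Sum.inr s) := by
          intro s
          rw [pL.map_smulₛₗ, hpLu, hd']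
        simp_rw [this]
        rw [hd, sub_self]
      have h2 : t • (c - ∑ s, d' s • u (Sum.inr s)) = 0 := hker_pL_t _ h1
      have h3 : t • c = ∑ s, d' s • (t • u (Sum.inr s)) := by
        have h2' : t • c - t • (∑ s, d' s • u (Sum.inr s)) = 0 := by
          rw [← smul_sub]; exact h2
        rw [sub_eq_zero.mp h2', Finset.smul_sum]
        exact Finset.sum_congr rfl fun s _ => smul_comm t (d' s) _
      rw [h3]
      exact Submodule.sum_mem _ fun s _ =>
        Submodule.smul_mem _ _ (Submodule.subset_span ⟨s, rfl⟩)
    · rw [Submodule.span_le]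
      rintro _ ⟨s, rfl⟩
      have huU : u (Sum.inr s) ∈ U := by
        rw [← hUcomap]
        show pL (u (Sum.inr s)) ∈ V
        rw [hpLu, hginr]
        exact (bV s).2
      exact huU
  -- the target submodule in the reindexed free module
  set p : τ ⊕ σ → Submodule R R :=
    Sum.elim (fun _ : τ => (⊥ : Ideal R)) (fun _ : σ => I) with hp
  set Q : Submodule R (τ ⊕ σ → R) :=
    Submodule.span R (Set.range fun s : σ =>
      t • (Pi.single (Sum.inr s) (1 : R) : τ ⊕ σ → R)) with hQ
  have heEsingle : ∀ l : τ ⊕ σ, eE (Pi.single l (1 : R)) = u l := by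
    intro l
    show e (Pi.single l (1 : R)) = u l
    rw [Fintype.linearCombination_apply_single, one_smul]
  have hmapKQ : K.map (eE.symm : (ι → R) →ₗ[R] (τ ⊕ σ → R)) = Q := by
    rw [hKdesc, Submodule.map_span, hQ]
    congr 1
    rw [← Set.range_comp]
    refine congrArg Set.range (funext fun s : σ => ?_)
    show eE.symm (t • u (Sum.inr s)) = t • (Pi.single (Sum.inr s) (1 : R) : τ ⊕ σ → R)
    rw [map_smul]
    congr 1
    rw [LinearEquiv.symm_apply_eq, heEsingle]
  have hQpi : Q = Submodule.pi Set.univ p := by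
    apply le_antisymm
    · rw [Submodule.span_le]
      rintro _ ⟨s, rfl⟩
      intro l _
      rcases eq_or_ne l (Sum.inr s) with rfl | hne
      · show (t • (Pi.single (Sum.inr s) (1 : R) : τ ⊕ σ → R)) (Sum.inr s) ∈ I
        rw [Pi.smul_apply, Pi.single_eq_same, smul_eq_mul, mul_one]
        exact htI
      · show (t • (Pi.single (Sum.inr s) (1 : R) : τ ⊕ σ → R)) l ∈ p l
        rw [Pi.smul_apply, Pi.single_eq_of_ne hne, smul_eq_mul, mul_zero]
        exact (p l).zero_mem
    · intro v hv
      have hvl : ∀ l, v l ∈ p l := fun l => Submodule.mem_pi.mp hv l (Set.mem_univ l)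
      have hveq : v = ∑ l, Pi.single l (v l) := (Finset.univ_sum_single v).symm
      rw [hveq]
      refine Submodule.sum_mem _ fun l _ => ?_
      rcases l with a | s
      · have : v (Sum.inl a) = 0 := by
          have := hvl (Sum.inl a)
          simpa [hp] using this
        rw [this, Pi.single_zero]
        exact Q.zero_mem
      · have : v (Sum.inr s) ∈ Ideal.span {t} := by
          rw [Ideal.span, ← ht]; exact hvl (Sum.inr s)
        obtain ⟨c, hc⟩ := Ideal.mem_span_singleton'.mp this
        have : (Pi.single (Sum.inr s) (v (Sum.inr s)) : τ ⊕ σ → R) =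
            c • (t • (Pi.single (Sum.inr s) (1 : R) : τ ⊕ σ → R)) := by
          rw [smul_smul, ← Pi.single_smul, smul_eq_mul, mul_one, hc]
        rw [this]
        exact Submodule.smul_mem _ _ (Submodule.subset_span ⟨s, rfl⟩)
  -- assemble the isomorphism
  let E1 : M ≃ₗ[R] ((ι → R) ⧸ K) := (φ.quotKerEquivOfSurjective hsurj).symm
  let E2 : ((ι → R) ⧸ K) ≃ₗ[R] ((τ ⊕ σ → R) ⧸ Q) :=
    Submodule.Quotient.equiv K Q eE.symm hmapKQ
  let E3 : ((τ ⊕ σ → R) ⧸ Q) ≃ₗ[R] ((τ ⊕ σ → R) ⧸ Submodule.pi Set.univ p) :=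
    Submodule.quotEquivOfEq _ _ hQpi
  let E4 : ((τ ⊕ σ → R) ⧸ Submodule.pi Set.univ p) ≃ₗ[R] (∀ l : τ ⊕ σ, R ⧸ p l) :=
    Submodule.quotientPi p
  let F : (∀ l : τ ⊕ σ, R ⧸ p l) →ₗ[R] ((τ → R ⧸ (⊥ : Ideal R)) × (σ → R ⧸ I)) :=
    LinearMap.prod
      (LinearMap.pi fun a : τ => LinearMap.proj (Sum.inl a))
      (LinearMap.pi fun s : σ => LinearMap.proj (Sum.inr s))
  let G : ((τ → R ⧸ (⊥ : Ideal R)) × (σ → R ⧸ I)) →ₗ[R] (∀ l : τ ⊕ σ, R ⧸ p l) :=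
    LinearMap.pi fun l => Sum.rec
      (motive := fun l => ((τ → R ⧸ (⊥ : Ideal R)) × (σ → R ⧸ I)) →ₗ[R] R ⧸ p l)
      (fun a => (LinearMap.proj a).comp (LinearMap.fst R _ _))
      (fun s => (LinearMap.proj s).comp (LinearMap.snd R _ _)) l
  let E5 : (∀ l : τ ⊕ σ, R ⧸ p l) ≃ₗ[R] ((τ → R ⧸ (⊥ : Ideal R)) × (σ → R ⧸ I)) :=
    LinearEquiv.ofLinear F G
      (LinearMap.ext fun z => rfl)
      (LinearMap.ext fun z => funext fun l => by cases l <;> rfl)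
  let E6a : (τ → R ⧸ (⊥ : Ideal R)) ≃ₗ[R] (Fin (Fintype.card τ) → R) :=
    (LinearEquiv.piCongrRight fun _ : τ =>
      Submodule.quotEquivOfEqBot (⊥ : Submodule R R) rfl).trans
      (LinearEquiv.funCongrLeft R R (Fintype.equivFin τ).symm)
  let E6b : (σ → R ⧸ I) ≃ₗ[R] (Fin (Fintype.card σ) → R ⧸ I) :=
    LinearEquiv.funCongrLeft R (R ⧸ I) (Fintype.equivFin σ).symm
  refine ⟨Fintype.card τ, Fintype.card σ, Fintype.card_pos, ⟨?_⟩⟩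
  exact E1.trans (E2.trans (E3.trans (E4.trans (E5.trans (E6a.prodCongr E6b)))))
end

section
/- Let R be a commutative ring and I ⊆ R a nilpotent ideal. Let A be a commutative R-algebra and a₁, …, a_d ∈ A elements such that the induced (R/I)-algebra homomorphism (R/I)[x₁, …, x_d] → A/IA sending xᵢ to the image of aᵢ is an isomorphism. Let J be the kernel of the surjective R-algebra homomorphism R[x₁, …, x_d] → A sending xᵢ to aᵢ. Then J ⊆ I·R[x₁, …, x_d]. -/
/-!
Reducing a polynomial modulo `I` and then evaluating at the classes of the `aᵢ` in `A/IA` is the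
same as evaluating at the `aᵢ` in `A` and then reducing modulo `IA`. So a polynomial `f` killed by
evaluation at `a` reduces to an element of the kernel of `(R/I)[x] → A/IA`; by injectivity its
reduction vanishes, i.e. all its coefficients lie in `I`.
-/

open MvPolynomial

section

variable {R A σ : Type*} [CommRing R] [CommRing A] [Algebra R A] (I : Ideal R) (a : σ → A)

theorem eval₂Hom_quotientMap_comp_map_mk :
    (eval₂Hom (Ideal.quotientMap (I.map (algebraMap R A)) (algebraMap R A) Ideal.le_comap_map)
        (fun i => Ideal.Quotient.mk (I.map (algebraMap R A)) (a i))).comp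
      (map (Ideal.Quotient.mk I))
      = (Ideal.Quotient.mk (I.map (algebraMap R A))).comp (aeval a).toRingHom := by
  ext <;> simp

theorem ker_aeval_le_map_C_of_injective
    (hinj : Function.Injective
      (eval₂Hom (Ideal.quotientMap (I.map (algebraMap R A)) (algebraMap R A) Ideal.le_comap_map)
        (fun i => Ideal.Quotient.mk (I.map (algebraMap R A)) (a i)))) :
    RingHom.ker (aeval (R := R) a) ≤ Ideal.map C I :=
  calc RingHom.ker (aeval (R := R) a)
      ≤ RingHom.ker ((Ideal.Quotient.mk (I.map (algebraMap R A))).comp (aeval a).toRingHom) :=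
        fun f hf => by simp_all
    _ = RingHom.ker (map (Ideal.Quotient.mk I) : MvPolynomial σ R →+* _) := by
        rw [← eval₂Hom_quotientMap_comp_map_mk, RingHom.ker_comp_of_injective _ hinj]
    _ = Ideal.map C I := by rw [ker_map, Ideal.mk_ker]

end

theorem ker_le_nilpotent_coeff_ideal_of_mod_iso_general
    (R : Type*) [CommRing R] (I : Ideal R)
    (A : Type*) [CommRing A] [Algebra R A] (d : ℕ) (a : Fin d → A)
    (hiso : Function.Bijective
      (MvPolynomial.eval₂Hom
        (Ideal.quotientMap (I.map (algebraMap R A)) (algebraMap R A) Ideal.le_comap_map)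
        (fun i => Ideal.Quotient.mk (I.map (algebraMap R A)) (a i)) :
        MvPolynomial (Fin d) (R ⧸ I) →+* A ⧸ I.map (algebraMap R A))) :
    RingHom.ker (MvPolynomial.aeval (R := R) a)
      ≤ Ideal.map (MvPolynomial.C : R →+* MvPolynomial (Fin d) R) I :=
  ker_aeval_le_map_C_of_injective I a hiso.injective

/-- Let `R` be a commutative ring and `I ⊆ R` a nilpotent ideal.  Let `A` be a
commutative `R`-algebra and `a₁, …, a_d ∈ A` elements such that the induced
`(R/I)`-algebra homomorphism `(R/I)[x₁, …, x_d] → A/IA`, `xᵢ ↦ aᵢ mod IA`, is an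
isomorphism (it is the ring homomorphism determined by the quotient map
`R/I → A/IA` of `algebraMap R A` on coefficients, sending each variable `xᵢ` to
the class of `aᵢ`).  Let `J` be the kernel of the `R`-algebra homomorphism
`R[x₁, …, x_d] → A`, `xᵢ ↦ aᵢ`.  Then `J ⊆ I·R[x₁, …, x_d]`, the ideal of
polynomials all of whose coefficients lie in `I` (i.e. the ideal generated by the
constants `C r`, `r ∈ I`). -/
theorem ker_le_nilpotent_coeff_ideal_of_mod_iso
    (R : Type*) [CommRing R] (I : Ideal R) (hInil : ∃ n : ℕ, 1 ≤ n ∧ I ^ n = ⊥)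
    (A : Type*) [CommRing A] [Algebra R A] (d : ℕ) (a : Fin d → A)
    (hiso : Function.Bijective
      (MvPolynomial.eval₂Hom
        (Ideal.quotientMap (I.map (algebraMap R A)) (algebraMap R A) Ideal.le_comap_map)
        (fun i => Ideal.Quotient.mk (I.map (algebraMap R A)) (a i)) :
        MvPolynomial (Fin d) (R ⧸ I) →+* A ⧸ I.map (algebraMap R A))) :
    RingHom.ker (MvPolynomial.aeval (R := R) a)
      ≤ Ideal.map (MvPolynomial.C : R →+* MvPolynomial (Fin d) R) I :=
  ker_le_nilpotent_coeff_ideal_of_mod_iso_general R I A d a hiso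
end

section
/- Let R be a commutative ring and I ⊆ R an ideal with I² = 0. Let J be an ideal of the polynomial ring R[x₁, …, x_d] such that every element of J has all its coefficients in I and zero constant coefficient. Set A = R[x₁, …, x_d]/J and let aᵢ denote the image of xᵢ in A. Then: (i) for every (b₁, …, b_d) ∈ I^d there is a well-defined R-algebra homomorphism Ψ_{(b₁,…,b_d)} : A → R with Ψ_{(b₁,…,b_d)}(aᵢ) = bᵢ for all i; and (ii) the map (b₁, …, b_d) ↦ Ψ_{(b₁,…,b_d)} is a bijection from I^d onto the set of R-algebra homomorphisms φ : A → R satisfying φ(aᵢ) ∈ I for all i. -/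
/-!
Evaluating a relation `p ∈ J` at a point `b ∈ Iᵈ` gives a sum of terms `cₘ bᵐ` with `m ≠ 0`;
each `cₘ` lies in `I` and so does each `bᵐ`, hence every term lies in `I² = 0`. So every such `b`
is a zero of `J` and defines a point `Ψ_b : A → R`, and conversely an `R`-point `φ` of `A` is
determined by the values `φ(aᵢ)`.
-/

namespace MvPolynomial

variable {R σ : Type*} [CommRing R] {I : Ideal R}

theorem prod_pow_mem_of_ne_zero {b : σ → R} (hb : ∀ i, b i ∈ I) {m : σ →₀ ℕ} (hm : m ≠ 0) :
    (m.prod fun i k => b i ^ k) ∈ I := by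
  obtain ⟨i, hi⟩ := Finsupp.ne_iff.mp hm
  exact Ideal.prod_mem I (Finsupp.mem_support_iff.mpr hi)
    (Ideal.pow_mem_of_mem I (hb i) _ (Nat.pos_of_ne_zero hi))

theorem eval_mem_sq_of_coeff_mem {p : MvPolynomial σ R} (hcoeff : ∀ m, coeff m p ∈ I)
    (hconst : coeff 0 p = 0) {b : σ → R} (hb : ∀ i, b i ∈ I) : eval b p ∈ I ^ 2 := by
  rw [eval_eq, sq]
  refine Ideal.sum_mem _ fun m _ => ?_
  rcases eq_or_ne m 0 with rfl | hm
  · simp [hconst]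
  · exact Ideal.mul_mem_mul (hcoeff m) (prod_pow_mem_of_ne_zero hb hm)

theorem algHom_quotient_eq_liftₐ_aeval {S : Type*} [CommRing S] [Algebra R S]
    {J : Ideal (MvPolynomial σ R)} (φ : (MvPolynomial σ R ⧸ J) →ₐ[R] S)
    (hφ : ∀ p ∈ J, aeval (fun i => φ (Ideal.Quotient.mk J (X i))) p = 0) :
    Ideal.Quotient.liftₐ J (aeval fun i => φ (Ideal.Quotient.mk J (X i))) hφ = φ :=
  Ideal.Quotient.algHom_ext R <| by
    rw [Ideal.Quotient.liftₐ_comp]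
    exact algHom_ext fun i => by simp

end MvPolynomial

open MvPolynomial

/-- Let `R` be a commutative ring and `I ⊆ R` an ideal with `I² = 0`.  Let `J` be an
ideal of `R[x₁, …, x_d]` all of whose elements have all coefficients in `I` and zero
constant coefficient, let `A = R[x₁, …, x_d]/J` and let `aᵢ` be the image of `xᵢ` in
`A`.  Then (i) for every `(b₁, …, b_d) ∈ Iᵈ` there is a well-defined `R`-algebra
homomorphism `Ψ_b : A → R` with `Ψ_b(aᵢ) = bᵢ` for all `i`; and (ii) `b ↦ Ψ_b` is a
bijection from `Iᵈ` onto the set of `R`-algebra homomorphisms `φ : A → R` with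
`φ(aᵢ) ∈ I` for all `i`. -/
theorem alg_homs_to_R_of_sq_zero_relations
    (R : Type*) [CommRing R] (I : Ideal R) (hI : I ^ 2 = ⊥)
    (d : ℕ) (J : Ideal (MvPolynomial (Fin d) R))
    (hJ : ∀ p ∈ J, (∀ m, MvPolynomial.coeff m p ∈ I) ∧ MvPolynomial.coeff 0 p = 0) :
    ∃ Ψ : {b : Fin d → R // ∀ i, b i ∈ I} →
        ((MvPolynomial (Fin d) R ⧸ J) →ₐ[R] R),
      (∀ b i, Ψ b (Ideal.Quotient.mk J (MvPolynomial.X i)) = b.1 i) ∧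
      Function.Injective Ψ ∧
      Set.range Ψ = {φ : (MvPolynomial (Fin d) R ⧸ J) →ₐ[R] R |
        ∀ i, φ (Ideal.Quotient.mk J (MvPolynomial.X i)) ∈ I} := by
  have vanish (b : Fin d → R) (hb : ∀ i, b i ∈ I) : ∀ p ∈ J, aeval b p = 0 := fun p hp => by
    simpa [hI] using eval_mem_sq_of_coeff_mem (hJ p hp).1 (hJ p hp).2 hb
  let Ψ (b : {b : Fin d → R // ∀ i, b i ∈ I}) :=
    Ideal.Quotient.liftₐ J (aeval b.1) (vanish b.1 b.2)
  have Ψ_X (b) (i) : Ψ b (Ideal.Quotient.mk J (X i)) = b.1 i := by simp [Ψ]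
  refine ⟨Ψ, Ψ_X, fun b c h => Subtype.ext (funext fun i => ?_), ?_⟩
  · simpa [Ψ_X] using congr($h (Ideal.Quotient.mk J (X i)))
  ext φ
  refine ⟨?_, fun hφ => ⟨⟨_, hφ⟩, algHom_quotient_eq_liftₐ_aeval φ _⟩⟩
  rintro ⟨b, rfl⟩ i
  simpa [Ψ_X] using b.2 i
end

section
/- Let R be a commutative ring and I ⊆ R an ideal with I² = 0. Let J be an ideal of R[x₁, …, x_d] all of whose elements have coefficients in I and zero constant coefficient, set A = R[x₁, …, x_d]/J with aᵢ the image of xᵢ, and for b ∈ I^d let Ψ_b : A → R be the R-algebra homomorphism with Ψ_b(aᵢ) = bᵢ. Suppose α* : A → A ⊗_R A is an R-algebra homomorphism such that for each i, α*(aᵢ) − (aᵢ ⊗ 1 + 1 ⊗ aᵢ) lies in I·K, where K is the ideal of A ⊗_R A generated by the elements a_j ⊗ 1 and 1 ⊗ a_j (1 ≤ j ≤ d). Then for all b, c ∈ I^d, the composite (Ψ_b ⊗ Ψ_c) ∘ α* : A → R equals Ψ_{b+c}, where Ψ_b ⊗ Ψ_c : A ⊗_R A → R is the R-algebra homomorphism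 induced by Ψ_b and Ψ_c. -/
open TensorProduct

/-!
The map `Ψ_b ⊗ Ψ_c` sends the generators `aⱼ ⊗ 1`, `1 ⊗ aⱼ` of `K` into `I`, hence `K` into `I`
and `I·K` into `I² = 0`. So `(Ψ_b ⊗ Ψ_c) ∘ α*` sends `aᵢ` to
`(Ψ_b ⊗ Ψ_c)(aᵢ ⊗ 1 + 1 ⊗ aᵢ) = bᵢ + cᵢ`, and an `R`-algebra map out of `A` is determined by
the images of the `aᵢ`.
-/

theorem LinearMap.eq_zero_of_mem_smul_of_sq_eq_bot {R M : Type*} [CommRing R] [AddCommGroup M]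
    [Module R M] {I : Ideal R} (hI : I ^ 2 = ⊥) (f : M →ₗ[R] R) {N : Submodule R M}
    (hN : N.map f ≤ I) {t : M} (ht : t ∈ I • N) : f t = 0 := by
  have hmap : (I • N).map f ≤ I ^ 2 := by
    rw [Submodule.map_smul'', pow_two]
    exact Submodule.smul_mono le_rfl hN
  simpa [hI] using hmap (Submodule.mem_map_of_mem ht)

theorem Algebra.TensorProduct.span_generators_le_comap_productMap {R A B ι : Type*}
    [CommRing R] [CommRing A] [CommRing B] [Algebra R A] [Algebra R B]
    {I : Ideal R} {f : A →ₐ[R] R} {g : B →ₐ[R] R} {x : ι → A} {y : ι → B}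
    (hx : ∀ j, f (x j) ∈ I) (hy : ∀ j, g (y j) ∈ I) :
    Ideal.span
        (Set.range (fun j => x j ⊗ₜ[R] (1 : B)) ∪ Set.range (fun j => (1 : A) ⊗ₜ[R] y j))
      ≤ I.comap (productMap f g) := by
  refine Ideal.span_le.mpr ?_
  rintro _ (⟨j, rfl⟩ | ⟨j, rfl⟩)
  · simpa using hx j
  · simpa using hy j

theorem Ideal.Quotient.mvPolynomial_algHom_ext {R S σ : Type*} [CommRing R] [CommRing S]
    [Algebra R S] {J : Ideal (MvPolynomial σ R)} {f g : MvPolynomial σ R ⧸ J →ₐ[R] S}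
    (h : ∀ i, f (Ideal.Quotient.mk J (MvPolynomial.X i)) =
      g (Ideal.Quotient.mk J (MvPolynomial.X i))) :
    f = g :=
  Ideal.Quotient.algHom_ext R (MvPolynomial.algHom_ext h)

theorem comultiplication_additivity_on_sq_zero_points_general
    (R : Type*) [CommRing R] (I : Ideal R) (hI : I ^ 2 = ⊥)
    (d : ℕ) (J : Ideal (MvPolynomial (Fin d) R))
    (K : Ideal ((MvPolynomial (Fin d) R ⧸ J) ⊗[R] (MvPolynomial (Fin d) R ⧸ J)))
    (hK : K = Ideal.span
      ((Set.range fun j : Fin d =>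
          (Ideal.Quotient.mk J (MvPolynomial.X j)) ⊗ₜ[R] (1 : MvPolynomial (Fin d) R ⧸ J)) ∪
       (Set.range fun j : Fin d =>
          (1 : MvPolynomial (Fin d) R ⧸ J) ⊗ₜ[R] (Ideal.Quotient.mk J (MvPolynomial.X j)))))
    (αstar : (MvPolynomial (Fin d) R ⧸ J) →ₐ[R]
      (MvPolynomial (Fin d) R ⧸ J) ⊗[R] (MvPolynomial (Fin d) R ⧸ J))
    (hα : ∀ i : Fin d,
      αstar (Ideal.Quotient.mk J (MvPolynomial.X i))
          - ((Ideal.Quotient.mk J (MvPolynomial.X i)) ⊗ₜ[R] 1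
            + 1 ⊗ₜ[R] (Ideal.Quotient.mk J (MvPolynomial.X i)))
        ∈ (I • (Submodule.restrictScalars R K) :
            Submodule R ((MvPolynomial (Fin d) R ⧸ J) ⊗[R] (MvPolynomial (Fin d) R ⧸ J))))
    (b c : Fin d → R) (hb : ∀ i, b i ∈ I) (hc : ∀ i, c i ∈ I)
    (Ψb Ψc Ψbc : (MvPolynomial (Fin d) R ⧸ J) →ₐ[R] R)
    (hΨb : ∀ i, Ψb (Ideal.Quotient.mk J (MvPolynomial.X i)) = b i)
    (hΨc : ∀ i, Ψc (Ideal.Quotient.mk J (MvPolynomial.X i)) = c i)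
    (hΨbc : ∀ i, Ψbc (Ideal.Quotient.mk J (MvPolynomial.X i)) = b i + c i) :
    (Algebra.TensorProduct.productMap Ψb Ψc).comp αstar = Ψbc := by
  set φ := Algebra.TensorProduct.productMap Ψb Ψc
  have hKI : (K.restrictScalars R).map φ.toLinearMap ≤ I := by
    rw [Submodule.map_le_iff_le_comap, hK]
    exact Algebra.TensorProduct.span_generators_le_comap_productMap
      (fun j => (hΨb j).symm ▸ hb j) (fun j => (hΨc j).symm ▸ hc j)
  refine Ideal.Quotient.mvPolynomial_algHom_ext fun i => ?_
  have hvanish := φ.toLinearMap.eq_zero_of_mem_smul_of_sq_eq_bot hI hKI (hα i)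
  rw [AlgHom.toLinearMap_apply, map_sub, sub_eq_zero] at hvanish
  simp [hvanish, φ, hΨb, hΨc, hΨbc]

/-- Let `R` be a commutative ring and `I ⊆ R` an ideal with `I² = 0`.  Let `J` be an
ideal of `R[x₁, …, x_d]` all of whose elements have all coefficients in `I` and zero
constant coefficient, let `A = R[x₁, …, x_d]/J` with `aᵢ` the image of `xᵢ`, and for
`b ∈ Iᵈ` let `Ψ_b : A → R` denote the `R`-algebra homomorphism with `Ψ_b(aᵢ) = bᵢ`
(quantified here by its defining property, which determines it uniquely).  Suppose
`α* : A → A ⊗[R] A` is an `R`-algebra homomorphism such that for each `i`,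
`α*(aᵢ) − (aᵢ ⊗ 1 + 1 ⊗ aᵢ)` lies in `I·K`, where `K` is the ideal of `A ⊗[R] A`
generated by the `a_j ⊗ 1` and `1 ⊗ a_j`.  Then for all `b, c ∈ Iᵈ` the composite
`(Ψ_b ⊗ Ψ_c) ∘ α* : A → R` equals `Ψ_{b+c}`. -/
theorem comultiplication_additivity_on_sq_zero_points
    (R : Type*) [CommRing R] (I : Ideal R) (hI : I ^ 2 = ⊥)
    (d : ℕ) (J : Ideal (MvPolynomial (Fin d) R))
    (hJ : ∀ p ∈ J, (∀ m, MvPolynomial.coeff m p ∈ I) ∧ MvPolynomial.coeff 0 p = 0)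
    (K : Ideal ((MvPolynomial (Fin d) R ⧸ J) ⊗[R] (MvPolynomial (Fin d) R ⧸ J)))
    (hK : K = Ideal.span
      ((Set.range fun j : Fin d =>
          (Ideal.Quotient.mk J (MvPolynomial.X j)) ⊗ₜ[R] (1 : MvPolynomial (Fin d) R ⧸ J)) ∪
       (Set.range fun j : Fin d =>
          (1 : MvPolynomial (Fin d) R ⧸ J) ⊗ₜ[R] (Ideal.Quotient.mk J (MvPolynomial.X j)))))
    (αstar : (MvPolynomial (Fin d) R ⧸ J) →ₐ[R]
      (MvPolynomial (Fin d) R ⧸ J) ⊗[R] (MvPolynomial (Fin d) R ⧸ J))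
    (hα : ∀ i : Fin d,
      αstar (Ideal.Quotient.mk J (MvPolynomial.X i))
          - ((Ideal.Quotient.mk J (MvPolynomial.X i)) ⊗ₜ[R] 1
            + 1 ⊗ₜ[R] (Ideal.Quotient.mk J (MvPolynomial.X i)))
        ∈ (I • (Submodule.restrictScalars R K) :
            Submodule R ((MvPolynomial (Fin d) R ⧸ J) ⊗[R] (MvPolynomial (Fin d) R ⧸ J))))
    (b c : Fin d → R) (hb : ∀ i, b i ∈ I) (hc : ∀ i, c i ∈ I)
    (Ψb Ψc Ψbc : (MvPolynomial (Fin d) R ⧸ J) →ₐ[R] R)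
    (hΨb : ∀ i, Ψb (Ideal.Quotient.mk J (MvPolynomial.X i)) = b i)
    (hΨc : ∀ i, Ψc (Ideal.Quotient.mk J (MvPolynomial.X i)) = c i)
    (hΨbc : ∀ i, Ψbc (Ideal.Quotient.mk J (MvPolynomial.X i)) = b i + c i) :
    (Algebra.TensorProduct.productMap Ψb Ψc).comp αstar = Ψbc :=
  comultiplication_additivity_on_sq_zero_points_general R I hI d J K hK αstar hα b c hb hc Ψb Ψc Ψbc
    hΨb hΨc hΨbc
end

section
/- Let R be a commutative ring and I ⊆ R an ideal with I² = 0. Let J be an ideal of R[x₁, …, x_d] all of whose elements have coefficients in I and zero constant coefficient, set A = R[x₁, …, x_d]/J with aᵢ the image of xᵢ, and for b ∈ I^d let Ψ_b : A → R be the R-algebra homomorphism with Ψ_b(aᵢ) = bᵢ. Suppose μ* : A → A[t] is an R-algebra homomorphism such that for each i, μ*(aᵢ) − t·aᵢ lies in I·K', where K' is the ideal of the polynomial ring A[t] generated by the elements a_j (1 ≤ j ≤ d). Then for every λ ∈ R and every b ∈ I^d, the composite of μ* with the R-algebra homomorphism A[t] → R determined by a ↦ Ψ_b(a) for a ∈ A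 and t ↦ λ equals Ψ_{λ·b}, where λ·b = (λb₁, …, λb_d) ∈ I^d. -/
set_option synthInstance.maxHeartbeats 1000000
set_option maxHeartbeats 1000000

/-- Let `R` be a commutative ring and `I ⊆ R` an ideal with `I² = 0`.  Let `J` be an
ideal of `R[x₁, …, x_d]` all of whose elements have all coefficients in `I` and zero
constant coefficient, let `A = R[x₁, …, x_d]/J` with `aᵢ` the image of `xᵢ`, and for
`b ∈ Iᵈ` let `Ψ_b : A → R` denote the `R`-algebra homomorphism with `Ψ_b(aᵢ) = bᵢ`
(quantified here by its defining property, which determines it uniquely).  Suppose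
`μ* : A → A[t]` is an `R`-algebra homomorphism such that for each `i`,
`μ*(aᵢ) − t·aᵢ` lies in `I·K'`, where `K'` is the ideal of `A[t]` generated by the
elements `a_j`.  Then for every `λ ∈ R` and every `b ∈ Iᵈ`, the composite of `μ*`
with the `R`-algebra homomorphism `A[t] → R` determined by `a ↦ Ψ_b(a)` and
`t ↦ λ` equals `Ψ_{λ·b}`. -/
theorem coaction_scalar_multiplicativity_on_sq_zero_points
    (R : Type*) [CommRing R] (I : Ideal R) (hI : I ^ 2 = ⊥)
    (d : ℕ) (J : Ideal (MvPolynomial (Fin d) R))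
    (hJ : ∀ p ∈ J, (∀ m, MvPolynomial.coeff m p ∈ I) ∧ MvPolynomial.coeff 0 p = 0)
    (K' : Ideal (Polynomial (MvPolynomial (Fin d) R ⧸ J)))
    (hK' : K' = Ideal.span
      (Set.range fun j : Fin d =>
        (Polynomial.C (Ideal.Quotient.mk J (MvPolynomial.X j)) :
          Polynomial (MvPolynomial (Fin d) R ⧸ J))))
    (μstar : (MvPolynomial (Fin d) R ⧸ J) →ₐ[R]
      Polynomial (MvPolynomial (Fin d) R ⧸ J))
    (hμ : ∀ i : Fin d,
      μstar (Ideal.Quotient.mk J (MvPolynomial.X i))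
          - Polynomial.X * Polynomial.C (Ideal.Quotient.mk J (MvPolynomial.X i))
        ∈ (I • (Submodule.restrictScalars R K') :
            Submodule R (Polynomial (MvPolynomial (Fin d) R ⧸ J))))
    (lam : R) (b : Fin d → R) (hb : ∀ i, b i ∈ I)
    (Ψb Ψlb : (MvPolynomial (Fin d) R ⧸ J) →ₐ[R] R)
    (hΨb : ∀ i, Ψb (Ideal.Quotient.mk J (MvPolynomial.X i)) = b i)
    (hΨlb : ∀ i, Ψlb (Ideal.Quotient.mk J (MvPolynomial.X i)) = lam * b i) :
    (Polynomial.eval₂AlgHom Ψb lam (fun x => Commute.all _ _)).comp μstar = Ψlb := by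
  set φ := (Polynomial.eval₂AlgHom Ψb lam (fun x => Commute.all _ _)) with hφ
  have hK : ∀ n ∈ K', φ n ∈ I := by
    intro n hn
    rw [hK'] at hn
    have : Ideal.span (Set.range fun j : Fin d =>
        (Polynomial.C (Ideal.Quotient.mk J (MvPolynomial.X j)) :
          Polynomial (MvPolynomial (Fin d) R ⧸ J))) ≤ Ideal.comap φ.toRingHom I := by
      rw [Ideal.span_le]
      rintro _ ⟨j, rfl⟩
      have h1 : φ (Polynomial.C (Ideal.Quotient.mk J (MvPolynomial.X j)))
          = Ψb (Ideal.Quotient.mk J (MvPolynomial.X j)) := by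
        simp [hφ]
      simpa [Ideal.mem_comap, h1, hΨb] using hb j
    exact this hn
  have hzero : ∀ e ∈ (I • (Submodule.restrictScalars R K') :
      Submodule R (Polynomial (MvPolynomial (Fin d) R ⧸ J))), φ e = 0 := by
    intro e he
    refine Submodule.smul_induction_on he ?_ ?_
    · intro r hr n hn
      have hn' : φ n ∈ I := hK n hn
      have : φ (r • n) = r * φ n := by
        rw [map_smul, smul_eq_mul]
      rw [this]
      have : r * φ n ∈ I ^ 2 := by
        rw [pow_two]
        exact Ideal.mul_mem_mul hr hn'
      rw [hI] at this
      simpa using this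
    · intro x y hx hy
      rw [map_add, hx, hy, add_zero]
  apply Ideal.Quotient.algHom_ext
  apply MvPolynomial.algHom_ext
  intro i
  have := hμ i
  have key : φ (μstar (Ideal.Quotient.mk J (MvPolynomial.X i))
      - Polynomial.X * Polynomial.C (Ideal.Quotient.mk J (MvPolynomial.X i))) = 0 :=
    hzero _ this
  rw [map_sub, sub_eq_zero] at key
  simp only [AlgHom.comp_apply, Ideal.Quotient.mkₐ_eq_mk]
  rw [key]
  simp only [hφ, hΨb, hΨlb]
  simp [hΨb, hΨlb]
  ring
end
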